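/- arXiv:2412.06072 — 4 statements merged into one kernel-verified Lean document; each statement's English description precedes it below -/
import Mathlib

section
/- Let W, q, P, E₀ be as in the Gallager setup, and let X̃ be an independent copy of the input distributed according to q, independent of (X,Y). For the wrong-path metric γ̃ = log₂(W(Y|X̃)/P(Y)) - b and any r ∈ (0,1), log₂ E[2^{r γ̃}] ≤ -r b - r E₀((1-r)/r). -/
/-!
Since `2 ^ (r * (log₂ (W x̃ y / P y) - b)) = 2 ^ (-r b) * (W x̃ y / P y) ^ r`, averaging over the
independent `x̃` and `x` factors the expectation as `2 ^ (-r b) * ∑ y, P y ^ (1 - r) * A y` with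
`A y = ∑ x, q x * W x y ^ r`. Hölder's inequality with exponents `1 / (1 - r)` and `1 / r` bounds
this sum by `(∑ y, P y) ^ (1 - r) * (∑ y, A y ^ (1 / r)) ^ r = (∑ y, A y ^ (1 / r)) ^ r`, and
`-log₂ ∑ y, A y ^ (1 / r)` is exactly `E₀ ((1 - r) / r)`.
-/

open Finset

theorem weighted_sum_pos {ι : Type*} {s : Finset ι} {q f : ι → ℝ} (hq : ∀ i ∈ s, 0 ≤ q i)
    (hq1 : ∑ i ∈ s, q i = 1) (hf : ∀ i ∈ s, 0 < f i) : 0 < ∑ i ∈ s, q i * f i := by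
  obtain ⟨i, hi, hqi⟩ := exists_ne_zero_of_sum_ne_zero (hq1 ▸ one_ne_zero)
  exact sum_pos' (fun j hj => mul_nonneg (hq j hj) (hf j hj).le)
    ⟨i, hi, mul_pos ((hq i hi).lt_of_ne' hqi) (hf i hi)⟩

namespace Real

theorem rpow_mul_logb_sub {a t : ℝ} (ha : 0 < a) (ha1 : a ≠ 1) (ht : 0 < t) (r c : ℝ) :
    a ^ (r * (logb a t - c)) = a ^ (-(r * c)) * t ^ r := by
  rw [mul_sub, sub_eq_add_neg, rpow_add ha, mul_comm r, rpow_mul ha.le, rpow_logb ha ha1 ht,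
    mul_comm]

theorem logb_rpow_mul_le {a c t B s : ℝ} (ha : 1 < a) (ht : 0 < t) (hB : 0 < B)
    (htB : t ≤ B ^ s) : logb a (a ^ c * t) ≤ c + s * logb a B := by
  have hac : 0 < a ^ c := rpow_pos_of_pos (zero_lt_one.trans ha) c
  calc logb a (a ^ c * t) ≤ logb a (a ^ c * B ^ s) :=
        logb_le_logb_of_le ha (mul_pos hac ht) (by gcongr)
    _ = c + s * logb a B := by
        rw [logb_mul hac.ne' (rpow_pos_of_pos hB s).ne', logb_rpow (zero_lt_one.trans ha) ha.ne',
          logb_rpow_eq_mul_logb_of_pos hB]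

/-- Hölder's inequality with the conjugate exponents `1 / (1 - r)` and `1 / r`. -/
theorem sum_rpow_one_sub_mul_le {ι : Type*} (s : Finset ι) {r : ℝ} (hr : r ∈ Set.Ioo 0 1)
    {f g : ι → ℝ} (hf : ∀ i ∈ s, 0 ≤ f i) (hg : ∀ i ∈ s, 0 ≤ g i) :
    ∑ i ∈ s, f i ^ (1 - r) * g i ≤ (∑ i ∈ s, f i) ^ (1 - r) * (∑ i ∈ s, g i ^ (1 / r)) ^ r := by
  have h1r : 0 < 1 - r := sub_pos.2 hr.2
  have h := inner_le_Lp_mul_Lq_of_nonneg s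
    (holderConjugate_one_div h1r hr.1 (sub_add_cancel 1 r))
    (f := fun i => f i ^ (1 - r)) (fun i hi => rpow_nonneg (hf i hi) _) hg
  have hpow : ∀ i ∈ s, (f i ^ (1 - r)) ^ (1 / (1 - r)) = f i := fun i hi => by
    rw [← rpow_mul (hf i hi), mul_one_div_cancel h1r.ne', rpow_one]
  rwa [one_div_one_div, one_div_one_div, sum_congr rfl hpow] at h

end Real

section Channel

variable {𝒳 𝒴 : Type*} [Fintype 𝒳] [Fintype 𝒴]

theorem sum_channel_output_eq_one {W : 𝒳 → 𝒴 → ℝ} {q : 𝒳 → ℝ}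
    (hWrow : ∀ x, ∑ y, W x y = 1) (hq1 : ∑ x, q x = 1) :
    ∑ y, ∑ x, q x * W x y = 1 := by
  rw [sum_comm]
  simp_rw [← mul_sum, hWrow, mul_one, hq1]

theorem sum_wrong_path_eq (W : 𝒳 → 𝒴 → ℝ) (q : 𝒳 → ℝ) {P : 𝒴 → ℝ} (r : ℝ)
    (hW : ∀ x y, 0 ≤ W x y) (hP : ∀ y, P y = ∑ x, q x * W x y) (hPpos : ∀ y, 0 < P y) :
    ∑ xt, ∑ x, ∑ y, q xt * q x * W x y * (W xt y / P y) ^ r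
      = ∑ y, P y ^ (1 - r) * ∑ x, q x * W x y ^ r := by
  have hterm : ∀ xt x y, q xt * q x * W x y * (W xt y / P y) ^ r
      = q xt * W xt y ^ r * (q x * W x y) / P y ^ r := fun xt x y => by
    rw [Real.div_rpow (hW xt y) (hPpos y).le]; ring
  calc _ = ∑ y, ∑ xt, ∑ x, q xt * W xt y ^ r * (q x * W x y) / P y ^ r := by
          simp_rw [hterm]
          exact (sum_congr rfl fun _ _ => sum_comm).trans sum_comm
    _ = ∑ y, (∑ x, q x * W x y ^ r) * P y / P y ^ r := by
          refine sum_congr rfl fun y _ => ?_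
          rw [hP, sum_mul_sum, sum_div]
          simp_rw [sum_div]
    _ = _ := by
          refine sum_congr rfl fun y _ => ?_
          rw [Real.rpow_sub (hPpos y), Real.rpow_one]
          ring

theorem wrong_path_mgf_eq (W : 𝒳 → 𝒴 → ℝ) (q : 𝒳 → ℝ) {P : 𝒴 → ℝ} (b r : ℝ)
    (hW : ∀ x y, 0 < W x y) (hP : ∀ y, P y = ∑ x, q x * W x y) (hPpos : ∀ y, 0 < P y) :
    ∑ xt, ∑ x, ∑ y, q xt * q x * W x y * (2 : ℝ) ^ (r * (Real.logb 2 (W xt y / P y) - b))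
      = (2 : ℝ) ^ (-(r * b)) * ∑ y, P y ^ (1 - r) * ∑ x, q x * W x y ^ r := by
  have hexp : ∀ xt y, (2 : ℝ) ^ (r * (Real.logb 2 (W xt y / P y) - b))
      = (2 : ℝ) ^ (-(r * b)) * (W xt y / P y) ^ r := fun xt y =>
    Real.rpow_mul_logb_sub two_pos (by norm_num) (div_pos (hW xt y) (hPpos y)) r b
  simp_rw [hexp, mul_left_comm _ ((2 : ℝ) ^ (-(r * b))), ← mul_sum]
  rw [sum_wrong_path_eq W q r (fun x y => (hW x y).le) hP hPpos]

end Channel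

theorem mgf_wrong_path_le_gallager_general
    {𝒳 𝒴 : Type*} [Fintype 𝒳] [Fintype 𝒴]
    (W : 𝒳 → 𝒴 → ℝ) (q : 𝒳 → ℝ) (b r : ℝ)
    (hW : ∀ x y, 0 < W x y) (hWrow : ∀ x, ∑ y, W x y = 1)
    (hq : ∀ x, 0 ≤ q x) (hq1 : ∑ x, q x = 1)
    (P : 𝒴 → ℝ) (hP : ∀ y, P y = ∑ x, q x * W x y)
    (E₀ : ℝ → ℝ)
    (hE₀ : ∀ ρ, E₀ ρ =
      -Real.logb 2 (∑ y, (∑ x, q x * W x y ^ (1 / (1 + ρ))) ^ (1 + ρ)))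
    (hr : r ∈ Set.Ioo (0 : ℝ) 1) :
    Real.logb 2
        (∑ xt, ∑ x, ∑ y, q xt * q x * W x y *
          (2 : ℝ) ^ (r * (Real.logb 2 (W xt y / P y) - b)))
      ≤ -r * b - r * E₀ ((1 - r) / r) := by
  have hPpos : ∀ y, 0 < P y := fun y =>
    hP y ▸ weighted_sum_pos (fun x _ => hq x) hq1 fun x _ => hW x y
  have hP1 : ∑ y, P y = 1 := by
    simp_rw [hP]
    exact sum_channel_output_eq_one hWrow hq1
  have hY : (univ : Finset 𝒴).Nonempty := nonempty_of_sum_ne_zero (hP1 ▸ one_ne_zero)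
  set A : 𝒴 → ℝ := fun y => ∑ x, q x * W x y ^ r
  have hApos : ∀ y, 0 < A y := fun y =>
    weighted_sum_pos (fun x _ => hq x) hq1 fun x _ => Real.rpow_pos_of_pos (hW x y) r
  have hgallager : E₀ ((1 - r) / r) = -Real.logb 2 (∑ y, A y ^ (1 / r)) := by
    have hρ : 1 + (1 - r) / r = 1 / r := by field_simp [hr.1.ne']; ring
    rw [hE₀, hρ, one_div_one_div]
  have hholder : ∑ y, P y ^ (1 - r) * A y ≤ (∑ y, A y ^ (1 / r)) ^ r := by
    simpa [hP1] using Real.sum_rpow_one_sub_mul_le univ hr (fun y _ => (hPpos y).le)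
      fun y _ => (hApos y).le
  rw [wrong_path_mgf_eq W q b r hW hP hPpos, hgallager]
  refine (Real.logb_rpow_mul_le one_lt_two ?_ ?_ hholder).trans_eq (by ring)
  · exact sum_pos (fun y _ => mul_pos (Real.rpow_pos_of_pos (hPpos y) _) (hApos y)) hY
  · exact sum_pos (fun y _ => Real.rpow_pos_of_pos (hApos y) _) hY

/-- Lemma 2: upper bound on the semi-invariant MGF of the wrong-path metric
`γ̃ = log₂(W(Y|X̃)/P(Y)) - b`, where `X̃ ~ q` is independent of `(X,Y) ~ q·W`:
for `r ∈ (0,1)`, `log₂ E[2^{r γ̃}] ≤ -r b - r E₀((1-r)/r)`. -/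
theorem mgf_wrong_path_le_gallager
    {𝒳 𝒴 : Type*} [Fintype 𝒳] [Fintype 𝒴]
    (W : 𝒳 → 𝒴 → ℝ) (q : 𝒳 → ℝ) (b r : ℝ)
    (hW : ∀ x y, 0 < W x y) (hWrow : ∀ x, ∑ y, W x y = 1)
    (hq : ∀ x, 0 ≤ q x) (hq1 : ∑ x, q x = 1)
    (P : 𝒴 → ℝ) (hP : ∀ y, P y = ∑ x, q x * W x y)
    (hPpos : ∀ y, 0 < P y)
    (E₀ : ℝ → ℝ)
    (hE₀ : ∀ ρ, E₀ ρ =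
      -Real.logb 2 (∑ y, (∑ x, q x * W x y ^ (1 / (1 + ρ))) ^ (1 + ρ)))
    (hr : r ∈ Set.Ioo (0 : ℝ) 1) :
    Real.logb 2
        (∑ xt, ∑ x, ∑ y, q xt * q x * W x y *
          (2 : ℝ) ^ (r * (Real.logb 2 (W xt y / P y) - b)))
      ≤ -r * b - r * E₀ ((1 - r) / r) :=
  mgf_wrong_path_le_gallager_general W q b r hW hWrow hq hq1 P hP E₀ hE₀ hr
end

section
/- With the Gallager setup and X̃ ~ q independent of (X,Y) ~ q·W, for any r ∈ (0,1), E[2^{r(γ̃ - γ)}] ≤ 2^{-(1-r)E₀(r/(1-r))} · 2^{-r E₀((1-r)/r)}, where γ = log₂(W(Y|X)/P(Y)) - b and γ̃ = log₂(W(Y|X̃)/P(Y)) - b (the bias terms cancel). Consequently, if b < ((1-r)/r)·E₀(r/(1-r)), then log₂ E[2^{r(γ̃-γ)}] ≤ -r b - r E₀((1-r)/r). -/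
open Finset Real

/-!
Since `2 ^ γ = W(y|x) / P(y)`, the bias and `P` cancel and `W(y|x) · 2^{r(γ̃-γ)}` factors as
`W(y|x)^{1-r} · W(y|x̃)^r`. Summing over the independent inputs turns the expectation into
`∑_y A(y) B(y)` with `A(y) = ∑_x q(x) W(y|x)^{1-r}` and `B(y) = ∑_x q(x) W(y|x)^r`; Hölder's
inequality with exponents `1/(1-r)` and `1/r` bounds it by the product of the Gallager sums at
`ρ = r/(1-r)` and `ρ = (1-r)/r`. The logarithmic form follows because `r b < (1-r) E₀(r/(1-r))`.
-/

theorem sum_sum_sum_mul_eq_sum_mul_sum {ι κ R : Type*} [Fintype ι] [Fintype κ]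
    [CommSemiring R] (f g : ι → κ → R) :
    ∑ i, ∑ j, ∑ k, f j k * g i k = ∑ k, (∑ j, f j k) * (∑ i, g i k) := by
  simp_rw [sum_mul_sum]
  rw [Finset.sum_comm, Finset.sum_comm (s := univ (α := κ))]
  exact Finset.sum_congr rfl fun j _ => Finset.sum_comm

theorem sum_mul_rpow_pos {ι : Type*} [Fintype ι] {q w : ι → ℝ} (t : ℝ)
    (hq : ∀ i, 0 ≤ q i) (hq_pos : 0 < ∑ i, q i) (hw : ∀ i, 0 < w i) :
    0 < ∑ i, q i * w i ^ t := by
  obtain ⟨i, -, hi⟩ := exists_lt_of_sum_lt (f := fun _ => 0) (g := q) (by simpa using hq_pos)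
  exact sum_pos' (fun j _ => mul_nonneg (hq j) (rpow_nonneg (hw j).le t))
    ⟨i, mem_univ i, mul_pos hi (rpow_pos_of_pos (hw i) t)⟩

theorem sum_mul_le_rpow_sum_mul_rpow_sum {ι : Type*} (s : Finset ι) {f g : ι → ℝ} {r : ℝ}
    (hr0 : 0 < r) (hr1 : r < 1) (hf : ∀ i ∈ s, 0 ≤ f i) (hg : ∀ i ∈ s, 0 ≤ g i) :
    ∑ i ∈ s, f i * g i ≤ (∑ i ∈ s, f i ^ (1 - r)⁻¹) ^ (1 - r) * (∑ i ∈ s, g i ^ r⁻¹) ^ r := by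
  simpa only [one_div, inv_inv] using
    inner_le_Lp_mul_Lq_of_nonneg s (HolderConjugate.one_sub_inv_inv hr0 hr1) hf hg

theorem mul_two_rpow_mul_logb_div_sub {w w' p : ℝ} (b r : ℝ) (hw : 0 < w) (hw' : 0 < w')
    (hp : p ≠ 0) :
    w * 2 ^ (r * ((logb 2 (w' / p) - b) - (logb 2 (w / p) - b))) = w ^ (1 - r) * w' ^ r := by
  have hexp : r * ((logb 2 (w' / p) - b) - (logb 2 (w / p) - b)) = logb 2 (w' / w) * r := by
    rw [logb_div hw'.ne' hp, logb_div hw.ne' hp, logb_div hw'.ne' hw.ne']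
    ring
  rw [hexp, rpow_mul zero_le_two, rpow_logb two_pos one_lt_two.ne' (div_pos hw' hw),
    div_rpow hw'.le hw.le, rpow_sub hw, rpow_one]
  field_simp

theorem two_rpow_neg_mul_gallager {𝒳 𝒴 : Type*} [Fintype 𝒳] [Fintype 𝒴]
    {W : 𝒳 → 𝒴 → ℝ} {q : 𝒳 → ℝ} {E₀ : ℝ → ℝ}
    (hE₀ : ∀ ρ, E₀ ρ = -logb 2 (∑ y, (∑ x, q x * W x y ^ (1 / (1 + ρ))) ^ (1 + ρ)))
    {t : ℝ} (ht : t ≠ 0) (hpos : 0 < ∑ y, (∑ x, q x * W x y ^ t) ^ t⁻¹) :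
    (2 : ℝ) ^ (-t * E₀ ((1 - t) / t)) = (∑ y, (∑ x, q x * W x y ^ t) ^ t⁻¹) ^ t := by
  have hρ : 1 + (1 - t) / t = t⁻¹ := by field_simp; ring
  rw [hE₀, hρ, one_div, inv_inv, neg_mul_neg, mul_comm, rpow_mul zero_le_two,
    rpow_logb two_pos one_lt_two.ne' hpos]

theorem mgf_metric_difference_le_gallager_general
    {𝒳 𝒴 : Type*} [Fintype 𝒳] [Fintype 𝒴]
    (W : 𝒳 → 𝒴 → ℝ) (q : 𝒳 → ℝ) (b r : ℝ)
    (hW : ∀ x y, 0 < W x y) (hWrow : ∀ x, ∑ y, W x y = 1)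
    (hq : ∀ x, 0 ≤ q x) (hq1 : ∑ x, q x = 1)
    (P : 𝒴 → ℝ)
    (hPpos : ∀ y, 0 < P y)
    (E₀ : ℝ → ℝ)
    (hE₀ : ∀ ρ, E₀ ρ =
      -Real.logb 2 (∑ y, (∑ x, q x * W x y ^ (1 / (1 + ρ))) ^ (1 + ρ)))
    (hr : r ∈ Set.Ioo (0 : ℝ) 1) :
    (∑ xt, ∑ x, ∑ y, q xt * q x * W x y *
        (2 : ℝ) ^ (r * ((Real.logb 2 (W xt y / P y) - b) -
          (Real.logb 2 (W x y / P y) - b))))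
      ≤ (2 : ℝ) ^ (-(1 - r) * E₀ (r / (1 - r))) * (2 : ℝ) ^ (-r * E₀ ((1 - r) / r))
    ∧ (b < ((1 - r) / r) * E₀ (r / (1 - r)) →
      Real.logb 2
        (∑ xt, ∑ x, ∑ y, q xt * q x * W x y *
          (2 : ℝ) ^ (r * ((Real.logb 2 (W xt y / P y) - b) -
            (Real.logb 2 (W x y / P y) - b))))
        ≤ -r * b - r * E₀ ((1 - r) / r)) := by
  obtain ⟨hr0, hr1⟩ := hr
  obtain ⟨x₀, -⟩ := nonempty_of_sum_ne_zero (hq1 ▸ one_ne_zero : ∑ x, q x ≠ 0)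
  have h𝒴 : (univ : Finset 𝒴).Nonempty :=
    nonempty_of_sum_ne_zero ((hWrow x₀).symm ▸ one_ne_zero : ∑ y, W x₀ y ≠ 0)
  have hmix_pos (t : ℝ) (y : 𝒴) : 0 < ∑ x, q x * W x y ^ t :=
    sum_mul_rpow_pos t hq (hq1 ▸ one_pos) (hW · y)
  have hgallager_pos (t : ℝ) : 0 < ∑ y, (∑ x, q x * W x y ^ t) ^ t⁻¹ :=
    sum_pos (fun y _ => rpow_pos_of_pos (hmix_pos t y) _) h𝒴
  have hfactor : (∑ xt, ∑ x, ∑ y, q xt * q x * W x y *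
        (2 : ℝ) ^ (r * ((logb 2 (W xt y / P y) - b) - (logb 2 (W x y / P y) - b))))
      = ∑ y, (∑ x, q x * W x y ^ (1 - r)) * (∑ xt, q xt * W xt y ^ r) := by
    rw [← sum_sum_sum_mul_eq_sum_mul_sum]
    refine sum_congr rfl fun xt _ => sum_congr rfl fun x _ => sum_congr rfl fun y _ => ?_
    rw [mul_assoc, mul_two_rpow_mul_logb_div_sub b r (hW x y) (hW xt y) (hPpos y).ne']
    ring
  have hbound := sum_mul_le_rpow_sum_mul_rpow_sum univ hr0 hr1
    (fun y _ => (hmix_pos (1 - r) y).le) (fun y _ => (hmix_pos r y).le)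
  have hE₀_one_sub := two_rpow_neg_mul_gallager hE₀ (sub_pos.2 hr1).ne' (hgallager_pos (1 - r))
  rw [sub_sub_cancel] at hE₀_one_sub
  rw [hE₀_one_sub, two_rpow_neg_mul_gallager hE₀ hr0.ne' (hgallager_pos r), hfactor]
  refine ⟨hbound, fun hb => ?_⟩
  have hrb : r * b < (1 - r) * E₀ (r / (1 - r)) := by
    have := mul_lt_mul_of_pos_left hb hr0
    rwa [← mul_assoc, mul_div_cancel₀ _ hr0.ne'] at this
  rw [logb_le_iff_le_rpow one_lt_two
    (sum_pos (fun y _ => mul_pos (hmix_pos _ y) (hmix_pos _ y)) h𝒴)]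
  refine hbound.trans ?_
  rw [← hE₀_one_sub, ← two_rpow_neg_mul_gallager hE₀ hr0.ne' (hgallager_pos r),
    ← rpow_add two_pos]
  exact rpow_le_rpow_of_exponent_le one_le_two (by linarith)

/-- Lemma 3: with `X̃ ~ q` independent of `(X,Y) ~ q·W`, for `r ∈ (0,1)` the MGF of
the metric difference satisfies
`E[2^{r(γ̃-γ)}] ≤ 2^{-(1-r)E₀(r/(1-r))} · 2^{-r E₀((1-r)/r)}` (the bias cancels),
and if `b < ((1-r)/r)·E₀(r/(1-r))` then
`log₂ E[2^{r(γ̃-γ)}] ≤ -r b - r E₀((1-r)/r)`. -/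
theorem mgf_metric_difference_le_gallager
    {𝒳 𝒴 : Type*} [Fintype 𝒳] [Fintype 𝒴]
    (W : 𝒳 → 𝒴 → ℝ) (q : 𝒳 → ℝ) (b r : ℝ)
    (hW : ∀ x y, 0 < W x y) (hWrow : ∀ x, ∑ y, W x y = 1)
    (hq : ∀ x, 0 ≤ q x) (hq1 : ∑ x, q x = 1)
    (P : 𝒴 → ℝ) (hP : ∀ y, P y = ∑ x, q x * W x y)
    (hPpos : ∀ y, 0 < P y)
    (E₀ : ℝ → ℝ)
    (hE₀ : ∀ ρ, E₀ ρ =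
      -Real.logb 2 (∑ y, (∑ x, q x * W x y ^ (1 / (1 + ρ))) ^ (1 + ρ)))
    (hr : r ∈ Set.Ioo (0 : ℝ) 1) :
    (∑ xt, ∑ x, ∑ y, q xt * q x * W x y *
        (2 : ℝ) ^ (r * ((Real.logb 2 (W xt y / P y) - b) -
          (Real.logb 2 (W x y / P y) - b))))
      ≤ (2 : ℝ) ^ (-(1 - r) * E₀ (r / (1 - r))) * (2 : ℝ) ^ (-r * E₀ ((1 - r) / r))
    ∧ (b < ((1 - r) / r) * E₀ (r / (1 - r)) →
      Real.logb 2
        (∑ xt, ∑ x, ∑ y, q xt * q x * W x y *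
          (2 : ℝ) ^ (r * ((Real.logb 2 (W xt y / P y) - b) -
            (Real.logb 2 (W x y / P y) - b))))
        ≤ -r * b - r * E₀ ((1 - r) / r)) :=
  mgf_metric_difference_le_gallager_general W q b r hW hWrow hq hq1 P hPpos E₀ hE₀ hr
end

section
/- (Theorem 2) Suppose the number of computations C satisfies C ≤ ∑_{l=1}^∞ ∑_{m=1}^{⌊2^{lR_l}⌋} ∑_{θ=1}^∞ C_{l,m,θ} where C_{l,m,θ} ∈ {0,1} with P(C_{l,m,θ} = 1) ≤ (l+1) 2^{-r(θ-2)Δ} 2^{-rlc}, and the rate profile satisfies R_l ≤ rc - ε for all l with ε > 0. Then with Δ = 1/r, E[C] ≤ 4/(1 - 2^{-ε})². -/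
/-!
At level `l` there are at most `2^{l(rc-ε)}` incorrect nodes, and with `Δ = 1/r` each indicator
has mean at most `(l+1) 2^{2-θ} 2^{-rlc}`, so level `l` at threshold `θ` contributes at most
`(l+1) 2^{-lε} 2^{2-θ}` to `E[C]`. Summing the geometric series over `θ ≥ 1` gives `4 (l+1) x^l`
with `x = 2^{-ε}`, and `∑_{l≥1} (l+1) x^l = 1/(1-x)² - 1`. Expectation and the double series
are exchanged by monotone convergence in `ℝ≥0∞`.
-/

open MeasureTheory Finset

lemma ENNReal.ofReal_tsum_le_tsum_ofReal {α : Type*} {g : α → ℝ} (hg : ∀ a, 0 ≤ g a) :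
    ENNReal.ofReal (∑' a, g a) ≤ ∑' a, ENNReal.ofReal (g a) := by
  by_cases h : Summable g
  · rw [ENNReal.ofReal_tsum_of_nonneg hg h]
  · simp [tsum_eq_zero_of_not_summable h]

theorem hasSum_add_two_mul_pow_succ {𝕜 : Type*} [NormedField 𝕜] [CompleteSpace 𝕜] {x : 𝕜}
    (hx : ‖x‖ < 1) :
    HasSum (fun l : ℕ => ((l : 𝕜) + 2) * x ^ (l + 1)) (1 / (1 - x) ^ 2 - 1) := by
  have h := hasSum_choose_mul_geometric_of_norm_lt_one 1 hx
  rw [← hasSum_nat_add_iff' 1] at h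
  simpa [add_assoc, one_add_one_eq_two] using h

section Integrals

variable {Ω : Type*} [MeasurableSpace Ω] {μ : Measure Ω}

theorem integral_le_of_le_tsum_tsum {κ ι : Type*} [Countable κ] [Countable ι] {C : Ω → ℝ}
    {f : κ → ι → Ω → ℝ} {b : κ → ι → ℝ} {B : κ → ℝ} {S : ℝ} (hC : Integrable C μ)
    (hCf : ∀ ω, C ω ≤ ∑' k, ∑' i, f k i ω) (hf0 : ∀ k i ω, 0 ≤ f k i ω)
    (hf : ∀ k i, Integrable (f k i) μ) (hfb : ∀ k i, ∫ ω, f k i ω ∂μ ≤ b k i)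
    (hb : ∀ k, HasSum (b k) (B k)) (hB : HasSum B S) :
    ∫ ω, C ω ∂μ ≤ S := by
  have hb0 : ∀ k i, 0 ≤ b k i := fun k i => (integral_nonneg (hf0 k i)).trans (hfb k i)
  have hB0 : ∀ k, 0 ≤ B k := fun k => (hb k).nonneg (hb0 k)
  have hmeas : ∀ k i, AEMeasurable (fun ω => ENNReal.ofReal (f k i ω)) μ :=
    fun k i => (hf k i).aemeasurable.ennreal_ofReal
  have hlintegral : ∫⁻ ω, ENNReal.ofReal (C ω) ∂μ ≤ ENNReal.ofReal S := calc
    ∫⁻ ω, ENNReal.ofReal (C ω) ∂μ ≤ ∫⁻ ω, ∑' k, ∑' i, ENNReal.ofReal (f k i ω) ∂μ :=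
      lintegral_mono fun ω => (ENNReal.ofReal_le_ofReal (hCf ω)).trans <|
        (ENNReal.ofReal_tsum_le_tsum_ofReal fun k => tsum_nonneg (hf0 k · ω)).trans <|
          ENNReal.tsum_le_tsum fun k => ENNReal.ofReal_tsum_le_tsum_ofReal (hf0 k · ω)
    _ = ∑' k, ∑' i, ENNReal.ofReal (∫ ω, f k i ω ∂μ) := by
      rw [lintegral_tsum fun k => AEMeasurable.tsum (hmeas k)]
      refine tsum_congr fun k => ?_
      rw [lintegral_tsum (hmeas k)]
      exact tsum_congr fun i =>
        (ofReal_integral_eq_lintegral_ofReal (hf k i) (.of_forall (hf0 k i))).symm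
    _ ≤ ∑' k, ∑' i, ENNReal.ofReal (b k i) :=
      ENNReal.tsum_le_tsum fun k => ENNReal.tsum_le_tsum fun i =>
        ENNReal.ofReal_le_ofReal (hfb k i)
    _ = ENNReal.ofReal S := by
      simp only [← ENNReal.ofReal_tsum_of_nonneg (hb0 _) (hb _).summable, (hb _).tsum_eq,
        ← ENNReal.ofReal_tsum_of_nonneg hB0 hB.summable, hB.tsum_eq]
  calc ∫ ω, C ω ∂μ ≤ (∫⁻ ω, ENNReal.ofReal (C ω) ∂μ).toReal := by
        rw [integral_eq_lintegral_pos_part_sub_lintegral_neg_part hC]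
        exact sub_le_self _ ENNReal.toReal_nonneg
    _ ≤ S := ENNReal.toReal_le_of_le_ofReal (hB.nonneg hB0) hlintegral

theorem integrable_of_eq_zero_or_eq_one [IsFiniteMeasure μ] {g : Ω → ℝ}
    (hg : AEStronglyMeasurable g μ) (h01 : ∀ ω, g ω = 0 ∨ g ω = 1) : Integrable g μ :=
  (integrable_const (1 : ℝ)).mono' hg <| .of_forall fun ω => by
    rcases h01 ω with h | h <;> simp [h]

theorem integral_sum_range_le {g : ℕ → Ω → ℝ} {n : ℕ} {N p : ℝ}
    (hg : ∀ m, Integrable (g m) μ) (hgp : ∀ m, ∫ ω, g m ω ∂μ ≤ p) (hp : 0 ≤ p)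
    (hn : (n : ℝ) ≤ N) : ∫ ω, ∑ m ∈ range n, g m ω ∂μ ≤ N * p := by
  rw [integral_finsetSum _ fun m _ => hg m]
  calc ∑ m ∈ range n, ∫ ω, g m ω ∂μ ≤ n * p := by
        simpa using sum_le_card_nsmul (range n) _ p fun m _ => hgp m
    _ ≤ N * p := mul_le_mul_of_nonneg_right hn hp

end Integrals

-- `l + 1` and `θ + 1` are the paper's level and threshold.
theorem two_rpow_rate_mul_level_bound_eq {r c ε : ℝ} (hr : r ≠ 0) (l θ : ℕ) :
    (2 : ℝ) ^ (((l : ℝ) + 1) * (r * c - ε)) *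
        ((((l + 1 : ℕ) : ℝ) + 1) * (2 : ℝ) ^ (-r * (((θ + 1 : ℕ) : ℝ) - 2) * (1 / r)) *
          (2 : ℝ) ^ (-r * ((l + 1 : ℕ) : ℝ) * c)) =
      ((l : ℝ) + 2) * ((2 : ℝ) ^ (-ε)) ^ (l + 1) * (2 * (1 / 2) ^ θ) := by
  have hexp : ((l : ℝ) + 1) * (r * c - ε) + -r * (((θ + 1 : ℕ) : ℝ) - 2) * (1 / r) +
      -r * ((l + 1 : ℕ) : ℝ) * c = -ε * ((l + 1 : ℕ) : ℝ) + (1 - θ) := by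
    push_cast; field_simp; ring
  calc _ = ((l : ℝ) + 2) * (2 : ℝ) ^ (((l : ℝ) + 1) * (r * c - ε) +
        -r * (((θ + 1 : ℕ) : ℝ) - 2) * (1 / r) + -r * ((l + 1 : ℕ) : ℝ) * c) := by
        rw [Real.rpow_add two_pos, Real.rpow_add two_pos]; push_cast; ring
    _ = ((l : ℝ) + 2) * (2 : ℝ) ^ (-ε * ((l + 1 : ℕ) : ℝ)) * 2 ^ (1 - (θ : ℝ)) := by
        rw [hexp, Real.rpow_add two_pos, mul_assoc]
    _ = _ := by
        rw [Real.rpow_mul_natCast zero_le_two, Real.rpow_sub two_pos, Real.rpow_one,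
          Real.rpow_natCast, one_div, inv_pow, div_eq_mul_inv]

theorem expected_computation_bound_general
    {Ω : Type*} [MeasurableSpace Ω] (μ : Measure Ω) [IsProbabilityMeasure μ]
    (r c ε Δ : ℝ) (hr : r ∈ Set.Ioo (0 : ℝ) 1) (hε : 0 < ε)
    (hΔ : Δ = 1 / r)
    (R : ℕ → ℝ) (hR : ∀ l, R l ≤ r * c - ε)
    (ind : ℕ → ℕ → ℕ → Ω → ℝ)
    (hmeas : ∀ l m θ, Measurable (ind l m θ))
    (hval : ∀ l m θ ω, ind l m θ ω = 0 ∨ ind l m θ ω = 1)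
    (hP : ∀ l m θ, 1 ≤ l → 1 ≤ θ →
      ∫ ω, ind l m θ ω ∂μ ≤
        ((l : ℝ) + 1) * (2 : ℝ) ^ (-r * ((θ : ℝ) - 2) * Δ) *
          (2 : ℝ) ^ (-r * (l : ℝ) * c))
    (C : Ω → ℝ) (hCint : Integrable C μ)
    (hC : ∀ ω, C ω ≤
      ∑' (l : ℕ) (θ : ℕ),
        ∑ m ∈ Finset.range (Nat.floor ((2 : ℝ) ^ (((l : ℝ) + 1) * R (l + 1)))),
          ind (l + 1) m (θ + 1) ω) :
    ∫ ω, C ω ∂μ ≤ 4 / (1 - (2 : ℝ) ^ (-ε)) ^ 2 := by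
  subst hΔ
  set x : ℝ := (2 : ℝ) ^ (-ε)
  have hx0 : 0 ≤ x := by positivity
  have hx1 : ‖x‖ < 1 := by
    rw [Real.norm_of_nonneg hx0]
    exact Real.rpow_lt_one_of_one_lt_of_neg one_lt_two (neg_neg_of_pos hε)
  have hind0 : ∀ l m θ ω, 0 ≤ ind l m θ ω := fun l m θ ω => by
    rcases hval l m θ ω with h | h <;> simp [h]
  have hint : ∀ l m θ, Integrable (ind l m θ) μ := fun l m θ =>
    integrable_of_eq_zero_or_eq_one (hmeas l m θ).aestronglyMeasurable (hval l m θ)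
  have hlevel : ∀ l θ : ℕ,
      ∫ ω, ∑ m ∈ range ⌊(2 : ℝ) ^ (((l : ℝ) + 1) * R (l + 1))⌋₊, ind (l + 1) m (θ + 1) ω ∂μ ≤
        ((l : ℝ) + 2) * x ^ (l + 1) * (2 * (1 / 2) ^ θ) := fun l θ => by
    rw [← two_rpow_rate_mul_level_bound_eq hr.1.ne' l θ]
    refine integral_sum_range_le (fun m => hint _ _ _)
      (fun m => hP (l + 1) m (θ + 1) (by omega) (by omega)) (by positivity) ?_
    refine (Nat.floor_le (by positivity)).trans (Real.rpow_le_rpow_of_exponent_le one_le_two ?_)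
    exact mul_le_mul_of_nonneg_left (hR _) (by positivity)
  calc ∫ ω, C ω ∂μ ≤ (1 / (1 - x) ^ 2 - 1) * (2 * 2) :=
        integral_le_of_le_tsum_tsum hCint hC
          (fun l θ ω => sum_nonneg fun m _ => hind0 _ _ _ ω)
          (fun l θ => integrable_finsetSum _ fun m _ => hint _ _ _) hlevel
          (fun l => (hasSum_geometric_two.mul_left 2).mul_left _)
          ((hasSum_add_two_mul_pow_succ hx1).mul_right _)
    _ ≤ 4 / (1 - x) ^ 2 := by
        linarith [show 4 / (1 - x) ^ 2 = 1 / (1 - x) ^ 2 * (2 * 2) by ring]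

/-- Theorem 2: if `C ≤ ∑_{l≥1} ∑_{m < ⌊2^{lR_l}⌋} ∑_{θ≥1} C_{l,m,θ}` with Bernoulli
indicators satisfying `P(C_{l,m,θ} = 1) ≤ (l+1) 2^{-r(θ-2)Δ} 2^{-rlc}` and the rate
profile satisfies `R_l ≤ rc - ε` with `ε > 0`, then with `Δ = 1/r` one has
`E[C] ≤ 4/(1 - 2^{-ε})²`. -/
theorem expected_computation_bound
    {Ω : Type*} [MeasurableSpace Ω] (μ : Measure Ω) [IsProbabilityMeasure μ]
    (r c ε Δ : ℝ) (hr : r ∈ Set.Ioo (0 : ℝ) 1) (hc : 0 < c) (hε : 0 < ε)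
    (hΔ : Δ = 1 / r)
    (R : ℕ → ℝ) (hR0 : ∀ l, 0 ≤ R l) (hR : ∀ l, R l ≤ r * c - ε)
    (ind : ℕ → ℕ → ℕ → Ω → ℝ)
    (hmeas : ∀ l m θ, Measurable (ind l m θ))
    (hval : ∀ l m θ ω, ind l m θ ω = 0 ∨ ind l m θ ω = 1)
    (hP : ∀ l m θ, 1 ≤ l → 1 ≤ θ →
      ∫ ω, ind l m θ ω ∂μ ≤
        ((l : ℝ) + 1) * (2 : ℝ) ^ (-r * ((θ : ℝ) - 2) * Δ) *
          (2 : ℝ) ^ (-r * (l : ℝ) * c))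
    (C : Ω → ℝ) (hCint : Integrable C μ)
    (hC : ∀ ω, C ω ≤
      ∑' (l : ℕ) (θ : ℕ),
        ∑ m ∈ Finset.range (Nat.floor ((2 : ℝ) ^ (((l : ℝ) + 1) * R (l + 1)))),
          ind (l + 1) m (θ + 1) ω) :
    ∫ ω, C ω ∂μ ≤ 4 / (1 - (2 : ℝ) ^ (-ε)) ^ 2 :=
  expected_computation_bound_general μ r c ε Δ hr hε hΔ R hR ind hmeas hval hP C hCint hC
end

section
/- (Theorem 3, moment bound) Under the hypotheses of Theorem 2 but with the strengthened rate condition R_l ≤ (r/β)c - ε for β > 1, and Δ = β/r, the β-th moment satisfies (E[C^β])^{1/β} ≤ 4/(1 - 2^{-ε})², where C ≤ ∑_{l,m,θ} C_{l,m,θ} with C_{l,m,θ} Bernoulli satisfying P(C_{l,m,θ}=1)^{1/β} ≤ (l+1)^{1/β} 2^{-r(θ-2)Δ/β} 2^{-(r/β)lc}. -/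
open MeasureTheory Finset
open scoped ENNReal

private lemma ofReal_tsum_le' {ι : Type*} (f : ι → ℝ) (hf : ∀ i, 0 ≤ f i) :
    ENNReal.ofReal (∑' i, f i) ≤ ∑' i, ENNReal.ofReal (f i) := by
  by_cases h : Summable f
  · exact le_of_eq (ENNReal.ofReal_tsum_of_nonneg hf h)
  · rw [tsum_eq_zero_of_not_summable h]; simp

private lemma lp_finset_sum_le {Ω : Type*} [MeasurableSpace Ω] (μ : Measure Ω) {β : ℝ}
    (hβ : 1 ≤ β) {ι : Type*} (s : Finset ι) (f : ι → Ω → ℝ≥0∞) (hf : ∀ i, Measurable (f i)) :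
    (∫⁻ ω, (∑ i ∈ s, f i ω) ^ β ∂μ) ^ (1 / β) ≤
      ∑ i ∈ s, (∫⁻ ω, f i ω ^ β ∂μ) ^ (1 / β) := by
  have hβ0 : (0:ℝ) < β := lt_of_lt_of_le one_pos hβ
  classical
  induction s using Finset.induction with
  | empty =>
      have h1 : (0:ℝ) < 1/β := by positivity
      simp only [Finset.sum_empty, ENNReal.zero_rpow_of_pos hβ0, lintegral_zero,
        ENNReal.zero_rpow_of_pos h1, le_refl]
  | insert _ _ ha ih =>
      rename_i a s
      simp only [Finset.sum_insert ha]
      have h1 : (∫⁻ ω, ((f a) + (fun ω => ∑ i ∈ s, f i ω)) ω ^ β ∂μ) ^ (1 / β) ≤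
          (∫⁻ ω, f a ω ^ β ∂μ) ^ (1 / β) +
            (∫⁻ ω, (∑ i ∈ s, f i ω) ^ β ∂μ) ^ (1 / β) :=
        ENNReal.lintegral_Lp_add_le (hf a).aemeasurable
          (Finset.measurable_sum s fun i _ => hf i).aemeasurable hβ
      simp only [Pi.add_apply] at h1
      exact h1.trans (add_le_add_right ih _)

/-- Theorem 3 (moment bound): under the hypotheses of Theorem 2 but with the
strengthened rate condition `R_l ≤ (r/β)c - ε` for `β > 1` and `Δ = β/r`, and with
Bernoulli indicators satisfying
`P(C_{l,m,θ}=1)^{1/β} ≤ (l+1)^{1/β} 2^{-r(θ-2)Δ/β} 2^{-(r/β)lc}`, the `β`-th moment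
of the computation satisfies `(E[C^β])^{1/β} ≤ 4/(1 - 2^{-ε})²`. -/
theorem computation_moment_bound
    {Ω : Type*} [MeasurableSpace Ω] (μ : Measure Ω) [IsProbabilityMeasure μ]
    (β r c ε Δ : ℝ) (hβ : 1 < β) (hr : r ∈ Set.Ioo (0 : ℝ) 1) (hc : 0 < c)
    (hε : 0 < ε) (hΔ : Δ = β / r)
    (R : ℕ → ℝ) (hR0 : ∀ l, 0 ≤ R l) (hR : ∀ l, R l ≤ (r / β) * c - ε)
    (ind : ℕ → ℕ → ℕ → Ω → ℝ)
    (hmeas : ∀ l m θ, Measurable (ind l m θ))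
    (hval : ∀ l m θ ω, ind l m θ ω = 0 ∨ ind l m θ ω = 1)
    (hP : ∀ l m θ, 1 ≤ l → 1 ≤ θ →
      (∫ ω, ind l m θ ω ∂μ) ^ (1 / β) ≤
        ((l : ℝ) + 1) ^ (1 / β) * (2 : ℝ) ^ (-r * ((θ : ℝ) - 2) * Δ / β) *
          (2 : ℝ) ^ (-(r / β) * (l : ℝ) * c))
    (C : Ω → ℝ) (hCnonneg : ∀ ω, 0 ≤ C ω)
    (hCint : Integrable (fun ω => C ω ^ β) μ)
    (hC : ∀ ω, C ω ≤
      ∑' (l : ℕ) (θ : ℕ),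
        ∑ m ∈ Finset.range (Nat.floor ((2 : ℝ) ^ (((l : ℝ) + 1) * R (l + 1)))),
          ind (l + 1) m (θ + 1) ω) :
    (∫ ω, C ω ^ β ∂μ) ^ (1 / β) ≤ 4 / (1 - (2 : ℝ) ^ (-ε)) ^ 2 := by
  obtain ⟨hr0, hr1⟩ := hr
  have hβ0 : (0:ℝ) < β := by linarith
  have hβinv : (0:ℝ) < 1/β := by positivity
  have hβinv1 : 1/β ≤ 1 := by rw [div_le_one hβ0]; linarith
  set q : ℝ := (2:ℝ) ^ (-ε) with hqdef
  have hq0 : 0 < q := Real.rpow_pos_of_pos two_pos _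
  have hq1 : q < 1 := Real.rpow_lt_one_of_one_lt_of_neg one_lt_two (by linarith)
  have h1q : 0 < 1 - q := by linarith
  set N : ℕ → ℕ := fun l => Nat.floor ((2:ℝ) ^ (((l:ℝ)+1) * R (l+1))) with hNdef
  set g : ℕ × ℕ → Ω → ℝ≥0∞ :=
    fun p ω => ∑ m ∈ Finset.range (N p.1), ENNReal.ofReal (ind (p.1+1) m (p.2+1) ω) with hgdef
  set B : ℕ → ℕ → ℝ := fun l θ =>
    ((l:ℝ)+1+1) ^ (1/β) * (2:ℝ) ^ ((1:ℝ) - (θ:ℝ)) * (2:ℝ) ^ (-(r/β) * ((l:ℝ)+1) * c)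
    with hBdef
  have hgm : ∀ p, Measurable (g p) := fun p =>
    Finset.measurable_sum _ fun m _ => (hmeas _ _ _).ennreal_ofReal
  have hind01 : ∀ l m θ ω, 0 ≤ ind l m θ ω ∧ ind l m θ ω ≤ 1 := by
    intro l m θ ω; rcases hval l m θ ω with h | h <;> simp [h]
  have hint : ∀ l m θ, Integrable (ind l m θ) μ := fun l m θ =>
    (integrable_const (1:ℝ)).mono' (hmeas l m θ).aestronglyMeasurable
      (ae_of_all _ fun ω => by
        rw [Real.norm_eq_abs, abs_of_nonneg (hind01 l m θ ω).1]
        exact (hind01 l m θ ω).2)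
  -- single indicator bound
  have hsingle : ∀ l m θ : ℕ,
      (∫⁻ ω, ENNReal.ofReal (ind (l+1) m (θ+1) ω) ^ β ∂μ) ^ (1/β)
        ≤ ENNReal.ofReal (B l θ) := by
    intro l m θ
    have e1 : ∀ ω, ENNReal.ofReal (ind (l+1) m (θ+1) ω) ^ β
        = ENNReal.ofReal (ind (l+1) m (θ+1) ω) := by
      intro ω; rcases hval (l+1) m (θ+1) ω with h | h <;>
        simp [h, ENNReal.zero_rpow_of_pos hβ0]
    rw [lintegral_congr e1,
      ← ofReal_integral_eq_lintegral_ofReal (hint _ _ _)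
        (ae_of_all _ fun ω => (hind01 _ _ _ ω).1),
      ENNReal.ofReal_rpow_of_nonneg (integral_nonneg fun ω => (hind01 _ _ _ ω).1) hβinv.le]
    apply ENNReal.ofReal_le_ofReal
    have hb := hP (l+1) m (θ+1) (Nat.le_add_left 1 l) (Nat.le_add_left 1 θ)
    have hexp : -r * (((θ+1:ℕ):ℝ) - 2) * Δ / β = 1 - (θ:ℝ) := by
      subst hΔ; push_cast; field_simp; ring
    refine hb.trans (le_of_eq ?_)
    rw [hexp, hBdef]
    push_cast
    ring
  -- Lβ bound for g p
  have hgle : ∀ p : ℕ × ℕ, (∫⁻ ω, g p ω ^ β ∂μ) ^ (1/β) ≤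
      (N p.1 : ℝ≥0∞) * ENNReal.ofReal (B p.1 p.2) := by
    intro p
    refine (lp_finset_sum_le μ hβ.le _ _ fun m => (hmeas _ _ _).ennreal_ofReal).trans ?_
    calc ∑ m ∈ range (N p.1),
          (∫⁻ ω, ENNReal.ofReal (ind (p.1+1) m (p.2+1) ω) ^ β ∂μ) ^ (1/β)
        ≤ ∑ _m ∈ range (N p.1), ENNReal.ofReal (B p.1 p.2) :=
          Finset.sum_le_sum fun m _ => hsingle p.1 m p.2
      _ = (N p.1 : ℝ≥0∞) * ENNReal.ofReal (B p.1 p.2) := by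
          rw [Finset.sum_const, Finset.card_range, nsmul_eq_mul]
  -- Minkowski for the countable sum
  have hmink : (∫⁻ ω, (∑' p : ℕ × ℕ, g p ω) ^ β ∂μ) ^ (1/β) ≤
      ∑' p : ℕ × ℕ, (∫⁻ ω, g p ω ^ β ∂μ) ^ (1/β) := by
    have hmono : Monotone fun s : Finset (ℕ × ℕ) => fun ω => (∑ p ∈ s, g p ω) ^ β :=
      fun s t hst ω => ENNReal.rpow_le_rpow (Finset.sum_le_sum_of_subset hst) hβ0.le
    have hmeas' : ∀ s : Finset (ℕ × ℕ), Measurable fun ω => (∑ p ∈ s, g p ω) ^ β :=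
      fun s => (Finset.measurable_sum s fun p _ => hgm p).pow_const β
    have key : ∫⁻ ω, (∑' p : ℕ × ℕ, g p ω) ^ β ∂μ =
        ⨆ s : Finset (ℕ × ℕ), ∫⁻ ω, (∑ p ∈ s, g p ω) ^ β ∂μ := by
      rw [← lintegral_iSup_directed (fun s => (hmeas' s).aemeasurable) hmono.directed_le]
      refine lintegral_congr fun ω => ?_
      rw [ENNReal.tsum_eq_iSup_sum]
      exact Monotone.map_iSup_of_continuousAt
        (ENNReal.continuous_rpow_const.continuousAt)
        (fun a b hab => ENNReal.rpow_le_rpow hab hβ0.le)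
        (by rw [ENNReal.bot_eq_zero, ENNReal.zero_rpow_of_pos hβ0])
    rw [key,
      Monotone.map_iSup_of_continuousAt (ENNReal.continuous_rpow_const.continuousAt)
        (fun a b hab => ENNReal.rpow_le_rpow hab hβinv.le)
        (by rw [ENNReal.bot_eq_zero, ENNReal.zero_rpow_of_pos hβinv])]
    exact iSup_le fun s => (lp_finset_sum_le μ hβ.le s g fun p => hgm p).trans
      (ENNReal.sum_le_tsum s)
  -- pointwise domination
  have hdom : ∀ ω, ENNReal.ofReal (C ω) ≤ ∑' p : ℕ × ℕ, g p ω := by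
    intro ω
    refine (ENNReal.ofReal_le_ofReal (hC ω)).trans ?_
    refine (ofReal_tsum_le' _ fun l => tsum_nonneg fun θ =>
      Finset.sum_nonneg fun m _ => (hind01 _ _ _ ω).1).trans ?_
    refine (ENNReal.tsum_le_tsum fun l => ofReal_tsum_le' _ fun θ =>
      Finset.sum_nonneg fun m _ => (hind01 _ _ _ ω).1).trans ?_
    rw [ENNReal.tsum_prod']
    refine ENNReal.tsum_le_tsum fun l => ENNReal.tsum_le_tsum fun θ => ?_
    exact le_of_eq (ENNReal.ofReal_sum_of_nonneg fun m _ => (hind01 _ _ _ ω).1)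
  -- the series bound
  have hterm : ∀ l θ : ℕ, (2:ℝ) ^ (((l:ℝ)+1) * R (l+1)) * B l θ ≤
      (((l:ℝ)+2) * q^(l+1)) * (2 * (1/2:ℝ)^θ) := by
    intro l θ
    have hA : (2:ℝ) ^ (((l:ℝ)+1) * R (l+1)) ≤ (2:ℝ) ^ (((l:ℝ)+1) * ((r/β)*c - ε)) :=
      Real.rpow_le_rpow_of_exponent_le one_le_two
        (mul_le_mul_of_nonneg_left (hR (l+1)) (by positivity))
    have hB1 : ((l:ℝ)+1+1) ^ (1/β) ≤ (l:ℝ)+2 := by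
      have h2 : ((l:ℝ)+1+1) ^ (1/β) ≤ ((l:ℝ)+1+1) ^ (1:ℝ) :=
        Real.rpow_le_rpow_of_exponent_le (by linarith [Nat.cast_nonneg (α := ℝ) l]) hβinv1
      rw [Real.rpow_one] at h2; linarith
    have hB2 : (2:ℝ) ^ ((1:ℝ) - (θ:ℝ)) = 2 * (1/2:ℝ)^θ := by
      rw [show (1:ℝ) - (θ:ℝ) = 1 + (-(θ:ℝ)) by ring, Real.rpow_add two_pos, Real.rpow_one,
        Real.rpow_neg (by norm_num), Real.rpow_natCast, ← inv_pow, one_div]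
    have hB3 : (2:ℝ) ^ (((l:ℝ)+1) * ((r/β)*c - ε)) * (2:ℝ) ^ (-(r/β)*((l:ℝ)+1)*c)
        = q^(l+1) := by
      rw [← Real.rpow_add two_pos, hqdef, ← Real.rpow_natCast ((2:ℝ) ^ (-ε)) (l+1),
        ← Real.rpow_mul (by norm_num)]
      congr 1; push_cast; ring
    have h5 : (2:ℝ) ^ (((l:ℝ)+1) * R (l+1)) * (2:ℝ) ^ (-(r/β)*((l:ℝ)+1)*c) ≤ q^(l+1) := by
      rw [← hB3]
      exact mul_le_mul_of_nonneg_right hA (Real.rpow_nonneg (by norm_num) _)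
    have hq' : (0:ℝ) ≤ q^(l+1) := pow_nonneg hq0.le _
    calc (2:ℝ) ^ (((l:ℝ)+1) * R (l+1)) * B l θ
        = ((2:ℝ) ^ (((l:ℝ)+1) * R (l+1)) * (2:ℝ) ^ (-(r/β)*((l:ℝ)+1)*c))
            * (((l:ℝ)+1+1) ^ (1/β)) * ((2:ℝ) ^ ((1:ℝ) - (θ:ℝ))) := by rw [hBdef]; ring
      _ ≤ (q^(l+1) * ((l:ℝ)+2)) * (2 * (1/2:ℝ)^θ) := by
          rw [hB2]
          refine mul_le_mul (mul_le_mul h5 hB1 (Real.rpow_nonneg (by positivity) _) hq')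
            le_rfl (by positivity) ?_
          have : (0:ℝ) ≤ (l:ℝ)+2 := by positivity
          positivity
      _ = (((l:ℝ)+2) * q^(l+1)) * (2 * (1/2:ℝ)^θ) := by ring
  have hKnonneg : ∀ l : ℕ, (0:ℝ) ≤ ((l:ℝ)+2) * q^(l+1) := fun l => by positivity
  -- inner θ-sum
  have hthetasum : ∀ l : ℕ, ∑' θ : ℕ, (N l : ℝ≥0∞) * ENNReal.ofReal (B l θ)
      ≤ ENNReal.ofReal ((((l:ℝ)+2) * q^(l+1)) * 4) := by
    intro l
    have hNle : (N l : ℝ≥0∞) ≤ ENNReal.ofReal ((2:ℝ) ^ (((l:ℝ)+1) * R (l+1))) := by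
      rw [show ((N l : ℝ≥0∞)) = ENNReal.ofReal ((N l : ℝ)) by
        rw [ENNReal.ofReal_natCast]]
      exact ENNReal.ofReal_le_ofReal (Nat.floor_le (Real.rpow_nonneg (by norm_num) _))
    have hBnn : ∀ θ : ℕ, 0 ≤ B l θ := by
      intro θ; rw [hBdef]
      have h1 : (0:ℝ) ≤ ((l:ℝ)+1+1) := by positivity
      positivity
    have step1 : ∀ θ : ℕ, (N l : ℝ≥0∞) * ENNReal.ofReal (B l θ)
        ≤ ENNReal.ofReal ((((l:ℝ)+2) * q^(l+1)) * (2 * (1/2:ℝ)^θ)) := by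
      intro θ
      calc (N l : ℝ≥0∞) * ENNReal.ofReal (B l θ)
          ≤ ENNReal.ofReal ((2:ℝ) ^ (((l:ℝ)+1) * R (l+1))) * ENNReal.ofReal (B l θ) :=
            mul_le_mul_left hNle _
        _ = ENNReal.ofReal ((2:ℝ) ^ (((l:ℝ)+1) * R (l+1)) * B l θ) :=
            (ENNReal.ofReal_mul (Real.rpow_nonneg (by norm_num) _)).symm
        _ ≤ _ := ENNReal.ofReal_le_ofReal (hterm l θ)
    refine (ENNReal.tsum_le_tsum step1).trans ?_
    have hsum : Summable fun θ : ℕ => (((l:ℝ)+2) * q^(l+1)) * (2 * (1/2:ℝ)^θ) := by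
      apply Summable.mul_left
      exact (summable_geometric_of_lt_one (by norm_num) (by norm_num)).mul_left 2
    rw [← ENNReal.ofReal_tsum_of_nonneg (fun θ => by positivity) hsum]
    apply ENNReal.ofReal_le_ofReal
    rw [tsum_mul_left, tsum_mul_left, tsum_geometric_of_lt_one (by norm_num) (by norm_num)]
    norm_num
  -- outer l-sum
  have hnorm : ‖q‖ < 1 := by rw [Real.norm_eq_abs, abs_of_pos hq0]; exact hq1
  have hs1 : HasSum (fun n : ℕ => ((n+1:ℕ):ℝ) * q^(n+1))
      (q/(1-q)^2 - ∑ i ∈ range 1, (i:ℝ) * q^i) :=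
    (hasSum_nat_add_iff' 1).2 (hasSum_coe_mul_geometric_of_norm_lt_one hnorm)
  have hs2 : HasSum (fun n : ℕ => q^(n+1)) ((1-q)⁻¹ - ∑ i ∈ range 1, q^i) :=
    (hasSum_nat_add_iff' 1).2 (hasSum_geometric_of_lt_one hq0.le hq1)
  have hs3 : HasSum (fun l : ℕ => ((l:ℝ)+2) * q^(l+1))
      ((q/(1-q)^2 - ∑ i ∈ range 1, (i:ℝ) * q^i) + ((1-q)⁻¹ - ∑ i ∈ range 1, q^i)) := by
    have h := hs1.add hs2
    have heq : (fun n : ℕ => ((n+1:ℕ):ℝ) * q^(n+1) + q^(n+1))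
        = fun l : ℕ => ((l:ℝ)+2) * q^(l+1) := by
      funext n; push_cast; ring
    rwa [heq] at h
  have hKval : (∑' l : ℕ, ((l:ℝ)+2) * q^(l+1)) ≤ 1/(1-q)^2 := by
    rw [hs3.tsum_eq]
    simp only [Finset.range_one, Finset.sum_singleton, Nat.cast_zero, pow_zero, zero_mul,
      mul_one, sub_zero]
    have heq2 : q/(1-q)^2 + ((1-q)⁻¹ - 1) = 1/(1-q)^2 - 1 := by
      field_simp
      ring
    rw [heq2]; linarith [h1q]
  have hseries : ∑' p : ℕ × ℕ, (N p.1 : ℝ≥0∞) * ENNReal.ofReal (B p.1 p.2)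
      ≤ ENNReal.ofReal (4/(1-q)^2) := by
    rw [ENNReal.tsum_prod']
    refine (ENNReal.tsum_le_tsum hthetasum).trans ?_
    have hsumK : Summable fun l : ℕ => (((l:ℝ)+2) * q^(l+1)) * 4 :=
      hs3.summable.mul_right 4
    rw [← ENNReal.ofReal_tsum_of_nonneg (fun l => by
      have := hKnonneg l; positivity) hsumK]
    apply ENNReal.ofReal_le_ofReal
    rw [tsum_mul_right]
    calc (∑' l : ℕ, ((l:ℝ)+2) * q^(l+1)) * 4 ≤ (1/(1-q)^2) * 4 :=
          mul_le_mul_of_nonneg_right hKval (by norm_num)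
      _ = 4/(1-q)^2 := by ring
  -- assemble
  have chain : (∫⁻ ω, ENNReal.ofReal (C ω) ^ β ∂μ) ^ (1/β) ≤ ENNReal.ofReal (4/(1-q)^2) :=
    calc (∫⁻ ω, ENNReal.ofReal (C ω) ^ β ∂μ) ^ (1/β)
        ≤ (∫⁻ ω, (∑' p : ℕ × ℕ, g p ω) ^ β ∂μ) ^ (1/β) :=
          ENNReal.rpow_le_rpow
            (lintegral_mono fun ω => ENNReal.rpow_le_rpow (hdom ω) hβ0.le) hβinv.le
      _ ≤ ∑' p : ℕ × ℕ, (∫⁻ ω, g p ω ^ β ∂μ) ^ (1/β) := hmink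
      _ ≤ ∑' p : ℕ × ℕ, (N p.1 : ℝ≥0∞) * ENNReal.ofReal (B p.1 p.2) :=
          ENNReal.tsum_le_tsum hgle
      _ ≤ ENNReal.ofReal (4/(1-q)^2) := hseries
  have hgoal : ∫ ω, C ω ^ β ∂μ = (∫⁻ ω, ENNReal.ofReal (C ω) ^ β ∂μ).toReal := by
    rw [integral_eq_lintegral_of_nonneg_ae
      (ae_of_all _ fun ω => Real.rpow_nonneg (hCnonneg ω) β) hCint.1]
    congr 1
    refine lintegral_congr fun ω => ?_
    rw [ENNReal.ofReal_rpow_of_nonneg (hCnonneg ω) hβ0.le]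
  rw [hgoal, ENNReal.toReal_rpow]
  exact ENNReal.toReal_le_of_le_ofReal (by positivity) chain
end
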